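/- In a stochastic BPA game with simple target set T, the winning region of player Diamond for keeping the probability of reaching T below 1 satisfies W_Diamond(T,<1) = C*AΓ* ∪ C*, where A = W_Diamond(T_ε,<1) ∩ Γ and C = W_Diamond(T,<1) ∩ Γ. -/

import Mathlib

open scoped Classical

/-- A stochastic BPA game: finite stack alphabet `Γ`, rules `X → α` with
`|α| ≤ 2`, symbols partitioned among player Box, player Diamond, and
probabilistic symbols, the latter carrying positive rational distributions
over their rules. -/
structure BPA (Γ : Type*) [Fintype Γ] where
  rule : Γ → List Γ → Prop
  rule_len : ∀ X α, rule X α → α.length ≤ 2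
  rule_total : ∀ X, ∃ α, rule X α
  isBox : Γ → Prop
  isDiamond : Γ → Prop
  isCirc : Γ → Prop
  cover : ∀ X, isBox X ∨ isDiamond X ∨ isCirc X
  disjBD : ∀ X, ¬ (isBox X ∧ isDiamond X)
  disjBC : ∀ X, ¬ (isBox X ∧ isCirc X)
  disjDC : ∀ X, ¬ (isDiamond X ∧ isCirc X)
  prob : Γ → List Γ → ℝ
  prob_nonneg : ∀ X α, 0 ≤ prob X α
  prob_rat : ∀ X α, ∃ q : ℚ, prob X α = (q : ℝ)
  prob_supp : ∀ X α, isCirc X → (0 < prob X α ↔ rule X α)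
  prob_sum : ∀ X, isCirc X → ∑' α, prob X α = 1

variable {Γ : Type*} [Fintype Γ]

/-- A history-dependent randomized strategy for the player owning the symbols
satisfying `own` in the stochastic game induced by a BPA game: to every history
(sequence of configurations) and current configuration `X :: β` with `own X`,
it assigns a probability distribution on the applicable rules. -/
structure BPA.Strat (Δ : BPA Γ) (own : Γ → Prop) where
  f : List (List Γ) → List Γ → List Γ → ℝ
  nonneg : ∀ w c α, 0 ≤ f w c α
  supp : ∀ w X β α, own X → f w (X :: β) α ≠ 0 → Δ.rule X α
  sum_one : ∀ w X β, own X → ∑' α, f w (X :: β) α = 1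

/-- The distribution on rules chosen at configuration `c` after history `w`. -/
noncomputable def BPA.choice (Δ : BPA Γ) (σ : Δ.Strat Δ.isBox)
    (π : Δ.Strat Δ.isDiamond) (w : List (List Γ)) (c : List Γ) (α : List Γ) : ℝ :=
  match c with
  | [] => 0
  | X :: _ => if Δ.isBox X then σ.f w c α else if Δ.isDiamond X then π.f w c α
      else Δ.prob X α

/-- One-step transition probability between configurations in the play
induced by a BPA game (the empty configuration `ε` loops with probability 1,
and `X :: β` moves to `α ++ β` for a rule `X → α`). -/
noncomputable def BPA.stepP (Δ : BPA Γ) (σ : Δ.Strat Δ.isBox)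
    (π : Δ.Strat Δ.isDiamond) (w : List (List Γ)) (c c' : List Γ) : ℝ :=
  match c with
  | [] => if c' = [] then 1 else 0
  | X :: β => ∑' α : List Γ,
      if α ++ β = c' ∧ Δ.rule X α then Δ.choice σ π w (X :: β) α else 0

/-- Probability of reaching `T` from configuration `c` within at most `n`
transitions, after history `w`. -/
noncomputable def BPA.reachN (Δ : BPA Γ) (σ : Δ.Strat Δ.isBox)
    (π : Δ.Strat Δ.isDiamond) (T : Set (List Γ)) :
    ℕ → List (List Γ) → List Γ → ℝ
  | 0, _, c => if c ∈ T then 1 else 0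
  | n+1, w, c => if c ∈ T then 1 else
      ∑' c', Δ.stepP σ π w c c' * BPA.reachN Δ σ π T n (w ++ [c]) c'

/-- Probability `P_c^{σ,π}(Reach(T))` of reaching `T` from configuration `c`. -/
noncomputable def BPA.reachP (Δ : BPA Γ) (σ : Δ.Strat Δ.isBox)
    (π : Δ.Strat Δ.isDiamond) (T : Set (List Γ)) (c : List Γ) : ℝ :=
  ⨆ n, Δ.reachN σ π T n [] c

/-- The winning region `W_Box(T, >0)`. -/
def BPA.WBoxPos (Δ : BPA Γ) (T : Set (List Γ)) : Set (List Γ) :=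
  {c | ∃ σ : Δ.Strat Δ.isBox, ∀ π : Δ.Strat Δ.isDiamond, 0 < Δ.reachP σ π T c}

/-- The winning region `W_Box(T, =1)`. -/
def BPA.WBoxOne (Δ : BPA Γ) (T : Set (List Γ)) : Set (List Γ) :=
  {c | ∃ σ : Δ.Strat Δ.isBox, ∀ π : Δ.Strat Δ.isDiamond, Δ.reachP σ π T c = 1}

/-- The winning region `W_Diamond(T, =0)`. -/
def BPA.WDiaZero (Δ : BPA Γ) (T : Set (List Γ)) : Set (List Γ) :=
  {c | ∃ π : Δ.Strat Δ.isDiamond, ∀ σ : Δ.Strat Δ.isBox, Δ.reachP σ π T c = 0}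

/-- The winning region `W_Diamond(T, <1)`. -/
def BPA.WDiaLtOne (Δ : BPA Γ) (T : Set (List Γ)) : Set (List Γ) :=
  {c | ∃ π : Δ.Strat Δ.isDiamond, ∀ σ : Δ.Strat Δ.isBox, Δ.reachP σ π T c < 1}

/-- The language `{[X] : X ∈ S}` of one-letter words over a set of symbols. -/
def symLang (S : Set Γ) : Language Γ := {c | ∃ X ∈ S, c = [X]}

/-- The simple set of target configurations `S·Γ*` determined by the set of
symbols `S`: membership depends only on the top stack symbol, and `ε ∉ S·Γ*`. -/
def topLang (S : Set Γ) : Language Γ := {c | ∃ X β, c = X :: β ∧ X ∈ S}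

/-!
Both sides are the language `L` given by `ε ∈ L` and `Xβ ∈ L ↔ X ∈ A ∨ (X ∈ C ∧ β ∈ L)`, so it
suffices to show that `W = W_◇(T,<1)` obeys this recursion. Until `β` is exposed, a play from `Xβ`
is a play from `X`, exposing `β` being an empty stack for the latter; strategies are transported
along this correspondence and glued to strategies for `β`.
* `X ∈ A`: Diamond keeps the probability of `T ∪ {ε}` from `X` below `1`, hence that of `T` from
  `Xβ`.
* `X ∉ C`: Box reaches `T` from `X` almost surely, hence from `Xβ`.
* `X ∈ C`, `β ∈ W`: Diamond switches to her strategy for `β`, after which `β` is worth `r < 1`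
  whatever the history. The probability of `T` from `Xβ` is at most the probability of `T` from
  `X` plus the expected payoff `r` on emptying the stack. If the stack is emptied with positive
  probability, this is at most `1 - δ`; otherwise it is the probability of `T` from `X`, `< 1`.
* `X ∉ A`, `β ∉ W`: Box reaches `T ∪ {ε}` from `X` almost surely and then plays to reach `T` from
  `β` almost surely; monotone convergence gives probability `1` from `Xβ`.
-/

open Filter Topology Set
open scoped Computability

namespace BPA

variable {Δ : BPA Γ}

noncomputable instance {own : Γ → Prop} : Inhabited (Δ.Strat own) where
  default :=
    { f := fun _ c α => match c with
        | [] => 0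
        | X :: _ => if α = (Δ.rule_total X).choose then 1 else 0
      nonneg := fun _ c α => by
        rcases c with _ | ⟨X, _⟩
        · exact le_rfl
        · dsimp only; split_ifs <;> norm_num
      supp := fun _ X _ α _ h => by
        dsimp only at h
        split_ifs at h with hα
        · exact hα ▸ (Δ.rule_total X).choose_spec
        · exact absurd rfl h
      sum_one := fun _ X _ _ => tsum_ite_eq _ _ }

section Step

variable (σ : Δ.Strat Δ.isBox) (π : Δ.Strat Δ.isDiamond) (w : List (List Γ))

lemma choice_nonneg (c α : List Γ) : 0 ≤ Δ.choice σ π w c α := by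
  rcases c with _ | ⟨X, t⟩
  · exact le_rfl
  · simp only [choice]
    split_ifs
    exacts [σ.nonneg .., π.nonneg .., Δ.prob_nonneg ..]

lemma choice_eq_zero_of_not_rule {X : Γ} {α : List Γ} (t : List Γ) (h : ¬ Δ.rule X α) :
    Δ.choice σ π w (X :: t) α = 0 := by
  simp only [choice]
  split_ifs with hb hd
  · exact by_contra fun hne => h (σ.supp _ _ _ _ hb hne)
  · exact by_contra fun hne => h (π.supp _ _ _ _ hd hne)
  · have hc : Δ.isCirc X := by rcases Δ.cover X with h' | h' | h' <;> tauto
    exact le_antisymm (not_lt.mp fun hp => h ((Δ.prob_supp X α hc).mp hp)) (Δ.prob_nonneg X α)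

lemma hasSum_choice (X : Γ) (t : List Γ) : HasSum (Δ.choice σ π w (X :: t)) 1 := by
  have htsum : ∑' α, Δ.choice σ π w (X :: t) α = 1 := by
    rcases Δ.cover X with hb | hd | hc
    · simpa [choice, hb] using σ.sum_one w X t hb
    · have hb : ¬ Δ.isBox X := fun hb => Δ.disjBD X ⟨hb, hd⟩
      simpa [choice, hb, hd] using π.sum_one w X t hd
    · have hb : ¬ Δ.isBox X := fun hb => Δ.disjBC X ⟨hb, hc⟩
      have hd : ¬ Δ.isDiamond X := fun hd => Δ.disjDC X ⟨hd, hc⟩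
      simpa [choice, hb, hd] using Δ.prob_sum X hc
  have hs : Summable (Δ.choice σ π w (X :: t)) := by
    by_contra hs
    simp [tsum_eq_zero_of_not_summable hs] at htsum
  exact (hs.hasSum_iff).mpr htsum

lemma stepP_nonneg (c c' : List Γ) : 0 ≤ Δ.stepP σ π w c c' := by
  rcases c with _ | ⟨X, t⟩
  · simp only [stepP]; split_ifs <;> norm_num
  · exact tsum_nonneg fun α => by split_ifs <;> simp [choice_nonneg]

lemma stepP_cons_append (X : Γ) (t α : List Γ) :
    Δ.stepP σ π w (X :: t) (α ++ t) = Δ.choice σ π w (X :: t) α := by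
  simp only [stepP]
  rw [tsum_eq_single α fun α' hα' => if_neg fun h => hα' (List.append_cancel_right h.1)]
  by_cases hr : Δ.rule X α
  · simp [hr]
  · simp [hr, choice_eq_zero_of_not_rule σ π w t hr]

lemma stepP_cons_eq_zero (X : Γ) {t c' : List Γ} (h : c' ∉ range (· ++ t)) :
    Δ.stepP σ π w (X :: t) c' = 0 :=
  (tsum_congr fun α => if_neg fun h' => h ⟨α, h'.1⟩).trans tsum_zero

lemma hasSum_stepP (c : List Γ) : HasSum (Δ.stepP σ π w c) 1 := by
  rcases c with _ | ⟨X, t⟩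
  · exact hasSum_ite_eq [] 1
  · refine (List.append_left_injective t |>.hasSum_iff fun c' hc' =>
      stepP_cons_eq_zero σ π w X hc').mp ?_
    simpa [Function.comp_def, stepP_cons_append] using hasSum_choice σ π w X t

lemma tsum_stepP_cons_mul (X : Γ) (t : List Γ) (G : List Γ → ℝ) :
    ∑' c', Δ.stepP σ π w (X :: t) c' * G c' = ∑' α, Δ.choice σ π w (X :: t) α * G (α ++ t) := by
  rw [← (List.append_left_injective t).tsum_eq fun c' hc' => by_contra fun h =>
    hc' (by rw [stepP_cons_eq_zero σ π w X h, zero_mul])]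
  simp only [stepP_cons_append]

variable {σ π w} {c : List Γ} {h h' : List Γ → ℝ}

lemma summable_stepP_mul (hh : ∀ c', h c' ∈ Icc (0 : ℝ) 1) :
    Summable fun c' => Δ.stepP σ π w c c' * h c' :=
  (hasSum_stepP σ π w c).summable.of_nonneg_of_le
    (fun c' => mul_nonneg (stepP_nonneg σ π w c c') (hh c').1)
    (fun c' => mul_le_of_le_one_right (stepP_nonneg σ π w c c') (hh c').2)

lemma tsum_stepP_mul_mem_Icc (hh : ∀ c', h c' ∈ Icc (0 : ℝ) 1) :
    ∑' c', Δ.stepP σ π w c c' * h c' ∈ Icc (0 : ℝ) 1 :=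
  ⟨tsum_nonneg fun c' => mul_nonneg (stepP_nonneg σ π w c c') (hh c').1,
    (hasSum_stepP σ π w c).tsum_eq ▸ (summable_stepP_mul hh).tsum_le_tsum
      (fun c' => mul_le_of_le_one_right (stepP_nonneg σ π w c c') (hh c').2)
      (hasSum_stepP σ π w c).summable⟩

lemma tsum_stepP_mul_mono (hh : ∀ c', h c' ∈ Icc (0 : ℝ) 1) (hh' : ∀ c', h' c' ∈ Icc (0 : ℝ) 1)
    (hle : ∀ c', h c' ≤ h' c') :
    ∑' c', Δ.stepP σ π w c c' * h c' ≤ ∑' c', Δ.stepP σ π w c c' * h' c' :=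
  (summable_stepP_mul hh).tsum_le_tsum
    (fun c' => mul_le_mul_of_nonneg_left (hle c') (stepP_nonneg σ π w c c'))
    (summable_stepP_mul hh')

end Step

lemma fuel_induction {α : Type*} (T : Set (List α)) {P : ℕ → List (List α) → List α → Prop}
    (nil : ∀ n w, P n w []) (mem : ∀ n w c, c ≠ [] → c ∈ T → P n w c)
    (zero : ∀ w c, c ≠ [] → c ∉ T → P 0 w c)
    (succ : ∀ n w c, c ≠ [] → c ∉ T → (∀ w' c', P n w' c') → P (n + 1) w c)
    (n : ℕ) (w : List (List α)) (c : List α) : P n w c := by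
  induction n generalizing w c with
  | zero =>
    by_cases hc : c = []
    · exact hc ▸ nil 0 w
    by_cases hT : c ∈ T
    exacts [mem 0 w c hc hT, zero w c hc hT]
  | succ n ih =>
    by_cases hc : c = []
    · exact hc ▸ nil (n + 1) w
    by_cases hT : c ∈ T
    exacts [mem _ w c hc hT, succ n w c hc hT ih]

/-- The value within `n` steps of the play that stops on entering `T`, with payoff `a`, or on
emptying the stack, with payoff `g` of the history. It is affine in `(a, g)`; `reachN` is the
case `a = 1`, with `g = 0` for the target `T` and `g = 1` for the target `T ∪ {ε}`. -/
noncomputable def stopValN (σ : Δ.Strat Δ.isBox) (π : Δ.Strat Δ.isDiamond) (T : Set (List Γ))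
    (a : ℝ) (g : List (List Γ) → ℝ) : ℕ → List (List Γ) → List Γ → ℝ
  | 0, w, c => if c = [] then g w else if c ∈ T then a else 0
  | n + 1, w, c => if c = [] then g w else if c ∈ T then a else
      ∑' c', Δ.stepP σ π w c c' * stopValN σ π T a g n (w ++ [c]) c'

section StopVal

variable (σ : Δ.Strat Δ.isBox) (π : Δ.Strat Δ.isDiamond) (T : Set (List Γ)) (a : ℝ)
  (g : List (List Γ) → ℝ) {c : List Γ}

lemma stopValN_nil (n : ℕ) (w : List (List Γ)) : stopValN σ π T a g n w [] = g w := by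
  cases n <;> simp [stopValN]

lemma stopValN_of_mem (hc : c ≠ []) (hT : c ∈ T) (n : ℕ) (w : List (List Γ)) :
    stopValN σ π T a g n w c = a := by
  cases n <;> simp [stopValN, hc, hT]

lemma stopValN_zero_of_notMem (hc : c ≠ []) (hT : c ∉ T) (w : List (List Γ)) :
    stopValN σ π T a g 0 w c = 0 := by
  simp [stopValN, hc, hT]

lemma stopValN_succ_of_notMem (hc : c ≠ []) (hT : c ∉ T) (n : ℕ) (w : List (List Γ)) :
    stopValN σ π T a g (n + 1) w c =
      ∑' c', Δ.stepP σ π w c c' * stopValN σ π T a g n (w ++ [c]) c' := by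
  simp [stopValN, hc, hT]

variable {σ π T a g}

lemma stopValN_mem_Icc (ha : a ∈ Icc (0 : ℝ) 1) (hg : ∀ w, g w ∈ Icc (0 : ℝ) 1)
    (n : ℕ) (w : List (List Γ)) (c : List Γ) : stopValN σ π T a g n w c ∈ Icc (0 : ℝ) 1 := by
  induction n, w, c using fuel_induction T with
  | nil n w => rw [stopValN_nil]; exact hg w
  | mem n w c hc hT => rw [stopValN_of_mem σ π T a g hc hT]; exact ha
  | zero w c hc hT => rw [stopValN_zero_of_notMem σ π T a g hc hT]; exact ⟨le_rfl, zero_le_one⟩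
  | succ n w c hc hT ih =>
    rw [stopValN_succ_of_notMem σ π T a g hc hT]; exact tsum_stepP_mul_mem_Icc fun c' => ih _ c'

lemma stopValN_le_succ (ha : a ∈ Icc (0 : ℝ) 1) (hg : ∀ w, g w ∈ Icc (0 : ℝ) 1)
    (n : ℕ) (w : List (List Γ)) (c : List Γ) :
    stopValN σ π T a g n w c ≤ stopValN σ π T a g (n + 1) w c := by
  induction n, w, c using fuel_induction T with
  | nil n w => rw [stopValN_nil, stopValN_nil]
  | mem n w c hc hT => rw [stopValN_of_mem σ π T a g hc hT, stopValN_of_mem σ π T a g hc hT]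
  | zero w c hc hT =>
    rw [stopValN_zero_of_notMem σ π T a g hc hT]; exact (stopValN_mem_Icc ha hg _ _ _).1
  | succ n w c hc hT ih =>
    rw [stopValN_succ_of_notMem σ π T a g hc hT, stopValN_succ_of_notMem σ π T a g hc hT]
    exact tsum_stepP_mul_mono (fun _ => stopValN_mem_Icc ha hg _ _ _)
      (fun _ => stopValN_mem_Icc ha hg _ _ _) fun c' => ih _ c'

lemma monotone_stopValN (ha : a ∈ Icc (0 : ℝ) 1) (hg : ∀ w, g w ∈ Icc (0 : ℝ) 1)
    (w : List (List Γ)) (c : List Γ) : Monotone fun n => stopValN σ π T a g n w c :=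
  monotone_nat_of_le_succ fun n => stopValN_le_succ ha hg n w c

lemma stopValN_add {a' b : ℝ} {g' h : List (List Γ) → ℝ} (ha : a ∈ Icc (0 : ℝ) 1)
    (hg : ∀ w, g w ∈ Icc (0 : ℝ) 1) (ha' : a' ∈ Icc (0 : ℝ) 1) (hg' : ∀ w, g' w ∈ Icc (0 : ℝ) 1)
    (hb : a + a' = b) (hh : ∀ w, g w + g' w = h w) (n : ℕ) (w : List (List Γ)) (c : List Γ) :
    stopValN σ π T a g n w c + stopValN σ π T a' g' n w c = stopValN σ π T b h n w c := by
  induction n, w, c using fuel_induction T with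
  | nil n w => simp only [stopValN_nil, hh]
  | mem n w c hc hT => simp only [stopValN_of_mem _ _ _ _ _ hc hT, hb]
  | zero w c hc hT => simp only [stopValN_zero_of_notMem _ _ _ _ _ hc hT, add_zero]
  | succ n w c hc hT ih =>
    simp only [stopValN_succ_of_notMem _ _ _ _ _ hc hT, ← ih]
    rw [← (summable_stepP_mul fun _ => stopValN_mem_Icc ha hg _ _ _).tsum_add
      (summable_stepP_mul fun _ => stopValN_mem_Icc ha' hg' _ _ _)]
    simp only [mul_add]

lemma stopValN_eq_zero_of_pos {h : List (List Γ) → ℝ} (hh : ∀ w, h w ∈ Icc (0 : ℝ) 1)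
    (hpos : ∀ w, 0 < h w) (n : ℕ) (w : List (List Γ)) (c : List Γ)
    (h0 : stopValN σ π T 0 h n w c = 0) : stopValN σ π T 0 g n w c = 0 := by
  induction n, w, c using fuel_induction T with
  | nil n w => rw [stopValN_nil] at h0; exact absurd h0 (hpos w).ne'
  | mem n w c hc hT => rw [stopValN_of_mem σ π T 0 g hc hT]
  | zero w c hc hT => rw [stopValN_zero_of_notMem σ π T 0 g hc hT]
  | succ n w c hc hT ih =>
    rw [stopValN_succ_of_notMem σ π T 0 h hc hT] at h0
    rw [stopValN_succ_of_notMem σ π T 0 g hc hT]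
    have hterms := (hasSum_zero_iff_of_nonneg fun c' => mul_nonneg (stepP_nonneg σ π _ c c')
      (stopValN_mem_Icc ⟨le_rfl, zero_le_one⟩ hh _ _ c').1).mp
      (h0 ▸ (summable_stepP_mul fun _ => stopValN_mem_Icc ⟨le_rfl, zero_le_one⟩ hh _ _ _).hasSum)
    refine (tsum_congr fun c' => ?_).trans tsum_zero
    rcases mul_eq_zero.mp (congrFun hterms c') with hs | hv
    · rw [hs, zero_mul]
    · rw [ih _ c' hv, mul_zero]

lemma tendsto_stopValN {g : ℕ → List (List Γ) → ℝ} {l : List (List Γ) → ℝ}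
    (ha : a ∈ Icc (0 : ℝ) 1) (hg : ∀ m w, g m w ∈ Icc (0 : ℝ) 1)
    (hlim : ∀ w, Tendsto (g · w) atTop (𝓝 (l w))) (n : ℕ) (w : List (List Γ)) (c : List Γ) :
    Tendsto (fun m => stopValN σ π T a (g m) n w c) atTop (𝓝 (stopValN σ π T a l n w c)) := by
  induction n, w, c using fuel_induction T with
  | nil n w => simpa only [stopValN_nil] using hlim w
  | mem n w c hc hT => simpa only [stopValN_of_mem _ _ _ _ _ hc hT] using tendsto_const_nhds
  | zero w c hc hT => simpa only [stopValN_zero_of_notMem _ _ _ _ _ hc hT] using tendsto_const_nhds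
  | succ n w c hc hT ih =>
    simp only [stopValN_succ_of_notMem _ _ _ _ _ hc hT]
    refine tendsto_tsum_of_dominated_convergence (hasSum_stepP σ π w c).summable
      (fun c' => (ih _ c').const_mul _) (Eventually.of_forall fun m c' => ?_)
    have hv := stopValN_mem_Icc (σ := σ) (π := π) (T := T) ha (hg m) n (w ++ [c]) c'
    rw [Real.norm_eq_abs, abs_of_nonneg (mul_nonneg (stepP_nonneg σ π w c c') hv.1)]
    exact mul_le_of_le_one_right (stepP_nonneg σ π w c c') hv.2

end StopVal

section Reach

variable {σ : Δ.Strat Δ.isBox} {π : Δ.Strat Δ.isDiamond} {T : Set (List Γ)} {c : List Γ}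

lemma reachN_of_mem (hT : c ∈ T) (n : ℕ) (w : List (List Γ)) : Δ.reachN σ π T n w c = 1 := by
  cases n <;> simp [reachN, hT]

lemma reachN_nil (hT : [] ∉ T) (n : ℕ) (w : List (List Γ)) : Δ.reachN σ π T n w [] = 0 := by
  induction n generalizing w with
  | zero => simp [reachN, hT]
  | succ n ih => simp [reachN, hT, stepP, ih]

lemma reachN_eq_stopValN {T' : Set (List Γ)} (hTT' : ∀ c ≠ [], c ∈ T ↔ c ∈ T') (n : ℕ)
    (w : List (List Γ)) (c : List Γ) :
    Δ.reachN σ π T n w c = stopValN σ π T' 1 (fun _ => if [] ∈ T then 1 else 0) n w c := by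
  induction n, w, c using fuel_induction T' with
  | nil n w =>
    rw [stopValN_nil]
    split_ifs with h
    exacts [reachN_of_mem h n w, reachN_nil h n w]
  | mem n w c hc hT => rw [stopValN_of_mem _ _ _ _ _ hc hT, reachN_of_mem ((hTT' c hc).2 hT)]
  | zero w c hc hT =>
    rw [stopValN_zero_of_notMem _ _ _ _ _ hc hT]; simp [reachN, (hTT' c hc).not.2 hT]
  | succ n w c hc hT ih =>
    rw [stopValN_succ_of_notMem _ _ _ _ _ hc hT]; simp [reachN, (hTT' c hc).not.2 hT, ih]

lemma reachN_eq_stopValN_zero (hT : [] ∉ T) (n : ℕ) (w : List (List Γ)) (c : List Γ) :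
    Δ.reachN σ π T n w c = stopValN σ π T 1 (fun _ => 0) n w c := by
  simpa [hT] using reachN_eq_stopValN (T' := T) (fun _ _ => Iff.rfl) n w c

lemma reachN_union_nil_eq_stopValN_one (n : ℕ) (w : List (List Γ)) (c : List Γ) :
    Δ.reachN σ π (T ∪ {[]}) n w c = stopValN σ π T 1 (fun _ => 1) n w c := by
  simpa using reachN_eq_stopValN (σ := σ) (π := π) (T := T ∪ {[]}) (T' := T)
    (fun c hc => by simp [hc]) n w c

lemma reachN_mem_Icc (n : ℕ) (w : List (List Γ)) (c : List Γ) :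
    Δ.reachN σ π T n w c ∈ Icc (0 : ℝ) 1 := by
  rw [reachN_eq_stopValN (T' := T) (fun _ _ => Iff.rfl)]
  exact stopValN_mem_Icc ⟨zero_le_one, le_rfl⟩ (fun _ => by split_ifs <;> simp) n w c

lemma monotone_reachN (w : List (List Γ)) (c : List Γ) :
    Monotone fun n => Δ.reachN σ π T n w c := by
  simp only [reachN_eq_stopValN (T' := T) (fun _ _ => Iff.rfl)]
  exact monotone_stopValN ⟨zero_le_one, le_rfl⟩ (fun _ => by split_ifs <;> simp) w c

lemma reachN_le_reachP (n : ℕ) (c : List Γ) : Δ.reachN σ π T n [] c ≤ Δ.reachP σ π T c :=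
  le_ciSup ⟨1, forall_mem_range.2 fun n => (reachN_mem_Icc n [] c).2⟩ n

lemma reachP_le_one (c : List Γ) : Δ.reachP σ π T c ≤ 1 :=
  ciSup_le fun n => (reachN_mem_Icc n [] c).2

lemma reachP_nonneg (c : List Γ) : 0 ≤ Δ.reachP σ π T c :=
  (reachN_mem_Icc 0 [] c).1.trans (reachN_le_reachP 0 c)

end Reach

lemma exists_stopValN_le_of_reachP_lt_one {σ : Δ.Strat Δ.isBox} {π : Δ.Strat Δ.isDiamond}
    {T : Set (List Γ)} {c : List Γ} {r : List (List Γ) → ℝ} (hT : [] ∉ T)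
    (hr : ∀ w, r w ∈ Ico (0 : ℝ) 1) (hc : Δ.reachP σ π T c < 1) :
    ∃ q < 1, ∀ n, stopValN σ π T 1 r n [] c ≤ q := by
  have hr' : ∀ w, r w ∈ Icc (0 : ℝ) 1 := fun w => Ico_subset_Icc_self (hr w)
  have hs : ∀ w, 1 - r w ∈ Icc (0 : ℝ) 1 := fun w =>
    ⟨by linarith [(hr w).2], by linarith [(hr w).1]⟩
  have h1 : (1 : ℝ) ∈ Icc (0 : ℝ) 1 := ⟨zero_le_one, le_rfl⟩
  have h0 : (0 : ℝ) ∈ Icc (0 : ℝ) 1 := ⟨le_rfl, zero_le_one⟩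
  set loss := fun n => stopValN σ π T 0 (fun w => 1 - r w) n [] c
  by_cases hloss : ∃ N, 0 < loss N
  · obtain ⟨N, hN⟩ := hloss
    refine ⟨1 - loss N, by linarith, fun n => ?_⟩
    calc stopValN σ π T 1 r n [] c ≤ stopValN σ π T 1 r (max n N) [] c :=
          monotone_stopValN h1 hr' [] c (le_max_left n N)
      _ = stopValN σ π T 1 (fun _ => 1) (max n N) [] c - loss (max n N) := by
          rw [← stopValN_add h1 hr' h0 hs (add_zero 1) (fun w => add_sub_cancel (r w) 1)]
          ring
      _ ≤ 1 - loss N := sub_le_sub (stopValN_mem_Icc h1 (fun _ => h1) _ [] c).2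
          (monotone_stopValN h0 hs [] c (le_max_right n N))
  · simp only [not_exists, not_lt] at hloss
    refine ⟨Δ.reachP σ π T c, hc, fun n => ?_⟩
    have hpop : stopValN σ π T 0 r n [] c = 0 :=
      stopValN_eq_zero_of_pos hs (fun w => by linarith [(hr w).2]) n [] c
        (le_antisymm (hloss n) (stopValN_mem_Icc h0 hs n [] c).1)
    calc stopValN σ π T 1 r n [] c
        = stopValN σ π T 1 (fun _ => 0) n [] c + stopValN σ π T 0 r n [] c :=
          (stopValN_add h1 (fun _ => h0) h0 hr' (add_zero 1) (fun w => zero_add (r w)) n [] c).symm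
      _ = Δ.reachN σ π T n [] c := by rw [hpop, add_zero, reachN_eq_stopValN_zero hT]
      _ ≤ Δ.reachP σ π T c := reachN_le_reachP n c

lemma notMem_WDiaLtOne_iff {T : Set (List Γ)} {c : List Γ} :
    c ∉ Δ.WDiaLtOne T ↔ ∀ π : Δ.Strat Δ.isDiamond, ∃ σ, Δ.reachP σ π T c = 1 := by
  simp only [WDiaLtOne, mem_ofPred_eq, not_exists, not_forall, not_lt]
  exact forall_congr' fun π => exists_congr fun σ =>
    ⟨(reachP_le_one c).antisymm, fun h => h.ge⟩

lemma nil_mem_WDiaLtOne {T : Set (List Γ)} (hT : [] ∉ T) : [] ∈ Δ.WDiaLtOne T :=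
  ⟨default, fun σ => by simp [reachP, reachN_nil hT]⟩

section Suffix

variable {α : Type*} (β : List α)

def liftHist (w : List (List α)) : List (List α) := w.map (· ++ β)

def strip (c : List α) : List α := c.take (c.length - β.length)

lemma strip_append (γ : List α) : strip β (γ ++ β) = γ := by simp [strip]

lemma map_strip_liftHist (w : List (List α)) : (liftHist β w).map (strip β) = w := by
  simp [liftHist, Function.comp_def, strip_append]

lemma liftHist_append_singleton (w : List (List α)) (γ : List α) :
    liftHist β (w ++ [γ]) = liftHist β w ++ [γ ++ β] := by
  simp [liftHist]

variable {β}

lemma strip_cons {X : α} {t : List α} (h : β.length < (X :: t).length) :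
    strip β (X :: t) = X :: strip β t := by
  simp only [strip, List.length_cons] at h ⊢
  rw [Nat.sub_add_comm (by omega), List.take_succ_cons]

lemma length_lt_length_append {γ : List α} (hγ : γ ≠ []) : β.length < (γ ++ β).length := by
  simpa using List.length_pos_iff.mpr hγ

end Suffix

section Strategies

variable {own : Γ → Prop}

def Strat.above (s : Δ.Strat own) (β : List Γ) : Δ.Strat own where
  f w c α := s.f (liftHist β w) (c ++ β) α
  nonneg _ _ _ := s.nonneg ..
  supp w X t α := s.supp (liftHist β w) X (t ++ β) α
  sum_one w X t := s.sum_one (liftHist β w) X (t ++ β)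

def Strat.shift (s : Δ.Strat own) (p : List (List Γ)) : Δ.Strat own where
  f u c α := s.f (p ++ u) c α
  nonneg _ _ _ := s.nonneg ..
  supp u := s.supp (p ++ u)
  sum_one u := s.sum_one (p ++ u)

/-- Play `s₁` on the part of the stack above `β` until `β` is exposed; from then on play `s₂ p`,
where `p` is the history so far, as if the game had started at `β`. -/
noncomputable def Strat.seq (s₁ : Δ.Strat own) (s₂ : List (List Γ) → Δ.Strat own)
    (β : List Γ) : Δ.Strat own where
  f v c α :=
    if (∀ x ∈ v, β.length < x.length) ∧ β.length < c.length then
      s₁.f (v.map (strip β)) (strip β c) α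
    else (s₂ (v.takeWhile (β.length < ·.length))).f (v.dropWhile (β.length < ·.length)) c α
  nonneg v c α := by split_ifs <;> apply Strat.nonneg
  supp v X t α hX hne := by
    split_ifs at hne with h
    · rw [strip_cons h.2] at hne; exact s₁.supp _ _ _ _ hX hne
    · exact (s₂ _).supp _ _ _ _ hX hne
  sum_one v X t hX := by
    split_ifs with h
    · rw [strip_cons h.2]; exact s₁.sum_one _ _ _ hX
    · exact (s₂ _).sum_one _ _ _ hX

variable (s₁ : Δ.Strat own) (s₂ : List (List Γ) → Δ.Strat own) {β : List Γ}
  {w : List (List Γ)}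

lemma Strat.seq_f_liftHist (hw : [] ∉ w) {γ : List Γ} (hγ : γ ≠ []) :
    (s₁.seq s₂ β).f (liftHist β w) (γ ++ β) = s₁.f w γ := by
  have hlong : ∀ x ∈ liftHist β w, β.length < x.length := by
    simp only [liftHist, List.mem_map]
    rintro _ ⟨x, hx, rfl⟩
    exact length_lt_length_append (ne_of_mem_of_not_mem hx hw)
  funext α
  simp only [Strat.seq]
  rw [if_pos ⟨hlong, length_lt_length_append hγ⟩, map_strip_liftHist, strip_append]

lemma Strat.seq_f_liftHist_append (hw : [] ∉ w) {u : List (List Γ)} {c : List Γ}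
    (hu : (u ++ [c]).head? = some β) :
    (s₁.seq s₂ β).f (liftHist β w ++ u) c = (s₂ (liftHist β w)).f u c := by
  have hlong : ∀ x ∈ liftHist β w, decide (β.length < x.length) = true := by
    simp only [liftHist, List.mem_map, decide_eq_true_eq]
    rintro _ ⟨x, hx, rfl⟩
    exact length_lt_length_append (ne_of_mem_of_not_mem hx hw)
  funext α
  simp only [Strat.seq]
  rcases u with _ | ⟨x, u⟩
  · obtain rfl : c = β := by simpa using hu
    rw [if_neg fun h => h.2.false]
    simp [List.takeWhile_eq_self_iff.mpr hlong, List.dropWhile_eq_nil_iff.mpr hlong]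
  · obtain rfl : x = β := by simpa using hu
    rw [if_neg fun h => (h.1 x (by simp)).false]
    simp [List.takeWhile_append_of_pos hlong, List.dropWhile_append_of_pos hlong]

end Strategies

section Simulation

variable {σ σ' : Δ.Strat Δ.isBox} {π π' : Δ.Strat Δ.isDiamond} {T : Set (List Γ)}

lemma choice_congr {w w' : List (List Γ)} {c c' : List Γ} (hc : c.head? = c'.head?)
    (hσ : σ.f w c = σ'.f w' c') (hπ : π.f w c = π'.f w' c') :
    Δ.choice σ π w c = Δ.choice σ' π' w' c' := by
  rcases c with _ | ⟨X, t⟩ <;> rcases c' with _ | ⟨X', t'⟩ <;>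
    simp only [List.head?_nil, List.head?_cons, reduceCtorEq, Option.some.injEq] at hc
  · rfl
  · subst hc; funext α; simp [choice, hσ, hπ]

lemma reachN_append_eq_of_choice_eq (p : List (List Γ)) (c₀ : List Γ)
    (h : ∀ u c, (u ++ [c]).head? = some c₀ → Δ.choice σ π (p ++ u) c = Δ.choice σ' π' u c)
    (n : ℕ) : Δ.reachN σ π T n p c₀ = Δ.reachN σ' π' T n [] c₀ := by
  suffices ∀ n u c, (u ++ [c]).head? = some c₀ →
      Δ.reachN σ π T n (p ++ u) c = Δ.reachN σ' π' T n u c by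
    simpa using this n [] c₀ rfl
  intro n
  induction n with
  | zero => intros; rfl
  | succ n ih =>
    intro u c hu
    have hstep : Δ.stepP σ π (p ++ u) c = Δ.stepP σ' π' u c := by
      funext c'; rcases c with _ | ⟨X, t⟩
      · rfl
      · simp only [stepP, h u _ hu]
    simp only [reachN, hstep, List.append_assoc]
    split_ifs
    · rfl
    · exact tsum_congr fun c' => by
        rw [ih (u ++ [c]) c' (by rw [List.head?_append_of_ne_nil _ (by simp), hu])]

lemma reachN_seq_left_liftHist (σ₁ : Δ.Strat Δ.isBox) (σ₂ : List (List Γ) → Δ.Strat Δ.isBox)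
    {β : List Γ} {w : List (List Γ)} (hw : [] ∉ w) (n : ℕ) :
    Δ.reachN (σ₁.seq σ₂ β) π T n (liftHist β w) β =
      Δ.reachN (σ₂ (liftHist β w)) (π.shift (liftHist β w)) T n [] β :=
  reachN_append_eq_of_choice_eq _ _
    (fun _ _ hu => choice_congr rfl (Strat.seq_f_liftHist_append σ₁ σ₂ hw hu) rfl) n

lemma reachN_seq_right_liftHist (π₁ : Δ.Strat Δ.isDiamond)
    (π₂ : List (List Γ) → Δ.Strat Δ.isDiamond) {β : List Γ} {w : List (List Γ)} (hw : [] ∉ w)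
    (n : ℕ) :
    Δ.reachN σ (π₁.seq π₂ β) T n (liftHist β w) β =
      Δ.reachN (σ.shift (liftHist β w)) (π₂ (liftHist β w)) T n [] β :=
  reachN_append_eq_of_choice_eq _ _
    (fun _ _ hu => choice_congr rfl rfl (Strat.seq_f_liftHist_append π₁ π₂ hw hu)) n

/-- Until `β` is exposed, `(σ, π)` plays from `γ ++ β` as `(σ', π')` plays from `γ`. -/
def Simulates (β : List Γ) (σ : Δ.Strat Δ.isBox) (π : Δ.Strat Δ.isDiamond)
    (σ' : Δ.Strat Δ.isBox) (π' : Δ.Strat Δ.isDiamond) : Prop :=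
  ∀ w γ, [] ∉ w → γ ≠ [] → Δ.choice σ π (liftHist β w) (γ ++ β) = Δ.choice σ' π' w γ

variable {β : List Γ}

lemma simulates_seq_left (σ₂ : List (List Γ) → Δ.Strat Δ.isBox) :
    Simulates β (σ.seq σ₂ β) π σ (π.above β) := fun _ _ hw hγ =>
  choice_congr (List.head?_append_of_ne_nil _ hγ) (Strat.seq_f_liftHist σ σ₂ hw hγ) rfl

lemma simulates_seq_right (π₂ : List (List Γ) → Δ.Strat Δ.isDiamond) :
    Simulates β σ (π.seq π₂ β) (σ.above β) π := fun _ _ hw hγ =>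
  choice_congr (List.head?_append_of_ne_nil _ hγ) rfl (Strat.seq_f_liftHist π π₂ hw hγ)

lemma tsum_stepP_append_mul (hsim : Simulates β σ π σ' π') {w : List (List Γ)} {γ : List Γ}
    (hw : [] ∉ w) (hγ : γ ≠ []) (G : List Γ → ℝ) :
    ∑' c', Δ.stepP σ π (liftHist β w) (γ ++ β) c' * G c' =
      ∑' γ', Δ.stepP σ' π' w γ γ' * G (γ' ++ β) := by
  obtain ⟨Z, t, rfl⟩ := List.exists_cons_of_ne_nil hγ
  rw [List.cons_append, tsum_stepP_cons_mul, tsum_stepP_cons_mul, ← List.cons_append,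
    hsim w _ hw hγ]
  simp only [List.append_assoc]

end Simulation

lemma nil_notMem_topLang {α : Type*} {S : Set α} : [] ∉ topLang S := by
  rintro ⟨X, β, h, -⟩
  cases h

lemma cons_mem_topLang {α : Type*} {S : Set α} {X : α} {t : List α} :
    X :: t ∈ topLang S ↔ X ∈ S :=
  ⟨fun ⟨_, _, h, hY⟩ => by cases h; exact hY, fun h => ⟨X, t, rfl, h⟩⟩

lemma append_mem_topLang_iff {α : Type*} {S : Set α} {γ : List α} (hγ : γ ≠ []) (β : List α) :
    γ ++ β ∈ topLang S ↔ γ ∈ topLang S := by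
  obtain ⟨X, t, rfl⟩ := List.exists_cons_of_ne_nil hγ
  rw [List.cons_append, cons_mem_topLang, cons_mem_topLang]

section Transfer

variable {T : Set (List Γ)} {β : List Γ} {σ σ' : Δ.Strat Δ.isBox} {π π' : Δ.Strat Δ.isDiamond}
  {g : List (List Γ) → ℝ}

lemma reachN_append_le_stopValN (hsim : Simulates β σ π σ' π')
    (hTβ : ∀ γ ≠ [], γ ++ β ∈ T ↔ γ ∈ T) (hg : ∀ w, g w ∈ Icc (0 : ℝ) 1)
    (hβ : ∀ w, [] ∉ w → ∀ k, Δ.reachN σ π T k (liftHist β w) β ≤ g w)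
    (n : ℕ) (w : List (List Γ)) (γ : List Γ) (hw : [] ∉ w) :
    Δ.reachN σ π T n (liftHist β w) (γ ++ β) ≤ stopValN σ' π' T 1 g n w γ := by
  induction n, w, γ using fuel_induction T with
  | nil n w => rw [stopValN_nil, List.nil_append]; exact hβ w hw n
  | mem n w γ hγ hT => rw [stopValN_of_mem _ _ _ _ _ hγ hT]; exact (reachN_mem_Icc ..).2
  | zero w γ hγ hT =>
    rw [stopValN_zero_of_notMem _ _ _ _ _ hγ hT]
    simp [reachN, (hTβ γ hγ).not.mpr hT]
  | succ n w γ hγ hT ih =>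
    rw [stopValN_succ_of_notMem _ _ _ _ _ hγ hT]
    simp only [reachN, (hTβ γ hγ).not.mpr hT, if_false]
    rw [tsum_stepP_append_mul hsim hw hγ]
    refine tsum_stepP_mul_mono (fun _ => reachN_mem_Icc ..) (fun _ => stopValN_mem_Icc
      ⟨zero_le_one, le_rfl⟩ hg ..) fun γ' => ?_
    rw [← liftHist_append_singleton]
    exact ih (w ++ [γ]) γ' (by simp [hw, Ne.symm hγ])

lemma stopValN_le_reachN_append (hsim : Simulates β σ π σ' π')
    (hTβ : ∀ γ ≠ [], γ ++ β ∈ T ↔ γ ∈ T) (hg : ∀ w, g w ∈ Icc (0 : ℝ) 1) {m : ℕ}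
    (hβ : ∀ w, [] ∉ w → g w ≤ Δ.reachN σ π T m (liftHist β w) β)
    (n : ℕ) (w : List (List Γ)) (γ : List Γ) (hw : [] ∉ w) :
    stopValN σ' π' T 1 g n w γ ≤ Δ.reachN σ π T (n + m) (liftHist β w) (γ ++ β) := by
  induction n, w, γ using fuel_induction T with
  | nil n w =>
    rw [stopValN_nil, List.nil_append]
    exact (hβ w hw).trans (monotone_reachN _ _ (Nat.le_add_left m n))
  | mem n w γ hγ hT =>
    rw [stopValN_of_mem _ _ _ _ _ hγ hT, reachN_of_mem ((hTβ γ hγ).mpr hT)]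
  | zero w γ hγ hT => rw [stopValN_zero_of_notMem _ _ _ _ _ hγ hT]; exact (reachN_mem_Icc ..).1
  | succ n w γ hγ hT ih =>
    rw [stopValN_succ_of_notMem _ _ _ _ _ hγ hT, Nat.add_right_comm]
    simp only [reachN, (hTβ γ hγ).not.mpr hT, if_false]
    rw [tsum_stepP_append_mul hsim hw hγ]
    refine tsum_stepP_mul_mono (fun _ => stopValN_mem_Icc ⟨zero_le_one, le_rfl⟩ hg ..)
      (fun _ => reachN_mem_Icc ..) fun γ' => ?_
    rw [← liftHist_append_singleton]
    exact ih (w ++ [γ]) γ' (by simp [hw, Ne.symm hγ])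

end Transfer

section Decomposition

variable {ΓT : Set Γ} {X : Γ} {β : List Γ}

lemma cons_mem_WDiaLtOne_of_mem_union_nil (hX : [X] ∈ Δ.WDiaLtOne (topLang ΓT ∪ {[]}))
    (β : List Γ) : X :: β ∈ Δ.WDiaLtOne (topLang ΓT) := by
  obtain ⟨π, hπ⟩ := hX
  refine ⟨π.seq (fun _ => π) β, fun σ => (ciSup_le fun n => ?_).trans_lt (hπ (σ.above β))⟩
  calc Δ.reachN σ (π.seq (fun _ => π) β) (topLang ΓT) n [] (X :: β)
      ≤ stopValN (σ.above β) π (topLang ΓT) 1 (fun _ => 1) n [] [X] :=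
        reachN_append_le_stopValN (simulates_seq_right _) (fun γ hγ => append_mem_topLang_iff hγ β)
          (fun _ => ⟨zero_le_one, le_rfl⟩) (fun _ _ k => (reachN_mem_Icc k _ β).2) n [] [X]
          List.not_mem_nil
    _ = Δ.reachN (σ.above β) π (topLang ΓT ∪ {[]}) n [] [X] :=
        (reachN_union_nil_eq_stopValN_one n [] [X]).symm
    _ ≤ _ := reachN_le_reachP n [X]

lemma cons_notMem_WDiaLtOne (hX : [X] ∉ Δ.WDiaLtOne (topLang ΓT)) (β : List Γ) :
    X :: β ∉ Δ.WDiaLtOne (topLang ΓT) := by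
  refine notMem_WDiaLtOne_iff.mpr fun π => ?_
  obtain ⟨σ, hσ⟩ := notMem_WDiaLtOne_iff.mp hX (π.above β)
  refine ⟨σ.seq (fun _ => σ) β, (reachP_le_one _).antisymm (hσ ▸ ciSup_le fun n => ?_)⟩
  calc Δ.reachN σ (π.above β) (topLang ΓT) n [] [X]
      = stopValN σ (π.above β) (topLang ΓT) 1 (fun _ => 0) n [] [X] :=
        reachN_eq_stopValN_zero nil_notMem_topLang n [] [X]
    _ ≤ Δ.reachN (σ.seq (fun _ => σ) β) π (topLang ΓT) (n + 0) [] (X :: β) :=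
        stopValN_le_reachN_append (simulates_seq_left _) (fun γ hγ => append_mem_topLang_iff hγ β)
          (fun _ => ⟨le_rfl, zero_le_one⟩) (fun _ _ => (reachN_mem_Icc 0 _ β).1) n [] [X]
          List.not_mem_nil
    _ ≤ _ := reachN_le_reachP _ _

lemma cons_mem_WDiaLtOne_of_mem (hX : [X] ∈ Δ.WDiaLtOne (topLang ΓT))
    (hβ : β ∈ Δ.WDiaLtOne (topLang ΓT)) : X :: β ∈ Δ.WDiaLtOne (topLang ΓT) := by
  obtain ⟨πX, hπX⟩ := hX
  obtain ⟨πβ, hπβ⟩ := hβ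
  refine ⟨πX.seq (fun _ => πβ) β, fun σ => ?_⟩
  set r : List (List Γ) → ℝ := fun w => Δ.reachP (σ.shift (liftHist β w)) πβ (topLang ΓT) β
  have hr : ∀ w, r w ∈ Ico (0 : ℝ) 1 := fun w => ⟨reachP_nonneg β, hπβ _⟩
  obtain ⟨q, hq, hle⟩ :=
    exists_stopValN_le_of_reachP_lt_one nil_notMem_topLang hr (hπX (σ.above β))
  refine (ciSup_le fun n => ?_).trans_lt hq
  calc Δ.reachN σ (πX.seq (fun _ => πβ) β) (topLang ΓT) n [] (X :: β)
      ≤ stopValN (σ.above β) πX (topLang ΓT) 1 r n [] [X] :=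
        reachN_append_le_stopValN (simulates_seq_right _) (fun γ hγ => append_mem_topLang_iff hγ β)
          (fun w => Ico_subset_Icc_self (hr w))
          (fun w hw k => (reachN_seq_right_liftHist πX _ hw k).trans_le (reachN_le_reachP k β))
          n [] [X] List.not_mem_nil
    _ ≤ q := hle n

lemma cons_notMem_WDiaLtOne_of_notMem (hX : [X] ∉ Δ.WDiaLtOne (topLang ΓT ∪ {[]}))
    (hβ : β ∉ Δ.WDiaLtOne (topLang ΓT)) : X :: β ∉ Δ.WDiaLtOne (topLang ΓT) := by
  refine notMem_WDiaLtOne_iff.mpr fun π => ?_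
  obtain ⟨σ₁, hσ₁⟩ := notMem_WDiaLtOne_iff.mp hX (π.above β)
  choose σ₂ hσ₂ using fun p => notMem_WDiaLtOne_iff.mp hβ (π.shift p)
  refine ⟨σ₁.seq σ₂ β, (reachP_le_one _).antisymm (hσ₁ ▸ ciSup_le fun n => ?_)⟩
  set g : ℕ → List (List Γ) → ℝ := fun m w =>
    Δ.reachN (σ₂ (liftHist β w)) (π.shift (liftHist β w)) (topLang ΓT) m [] β
  have hg : ∀ m w, g m w ∈ Icc (0 : ℝ) 1 := fun m w => reachN_mem_Icc m [] β
  have hlim : ∀ w, Tendsto (g · w) atTop (𝓝 1) := fun w => hσ₂ (liftHist β w) ▸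
    tendsto_atTop_ciSup (monotone_reachN [] β) ⟨1, forall_mem_range.2 fun m => (hg m w).2⟩
  refine (reachN_union_nil_eq_stopValN_one n [] [X]).trans_le <|
    le_of_tendsto (tendsto_stopValN ⟨zero_le_one, le_rfl⟩ hg hlim n [] [X])
      (Eventually.of_forall fun m => ?_)
  calc stopValN σ₁ (π.above β) (topLang ΓT) 1 (g m) n [] [X]
      ≤ Δ.reachN (σ₁.seq σ₂ β) π (topLang ΓT) (n + m) [] (X :: β) :=
        stopValN_le_reachN_append (simulates_seq_left _) (fun γ hγ => append_mem_topLang_iff hγ β)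
          (hg m) (fun w hw => (reachN_seq_left_liftHist σ₁ σ₂ hw m).ge) n [] [X] List.not_mem_nil
    _ ≤ _ := reachN_le_reachP _ _

lemma cons_mem_WDiaLtOne_iff :
    X :: β ∈ Δ.WDiaLtOne (topLang ΓT) ↔ [X] ∈ Δ.WDiaLtOne (topLang ΓT ∪ {[]}) ∨
      [X] ∈ Δ.WDiaLtOne (topLang ΓT) ∧ β ∈ Δ.WDiaLtOne (topLang ΓT) := by
  refine ⟨fun h => ?_, ?_⟩
  · by_contra hnot
    rw [not_or, not_and] at hnot
    by_cases hX : [X] ∈ Δ.WDiaLtOne (topLang ΓT)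
    · exact cons_notMem_WDiaLtOne_of_notMem hnot.1 (hnot.2 hX) h
    · exact cons_notMem_WDiaLtOne hX β h
  · rintro (hA | ⟨hC, hβ⟩)
    exacts [cons_mem_WDiaLtOne_of_mem_union_nil hA β, cons_mem_WDiaLtOne_of_mem hC hβ]

end Decomposition

end BPA

section Languages

variable {α : Type*} {S : Set α} {L : Language α} {X : α} {t : List α}

lemma cons_mem_symLang_mul : X :: t ∈ symLang S * L ↔ X ∈ S ∧ t ∈ L := by
  refine ⟨fun ⟨_, ⟨Y, hY, hYa⟩, b, hb, h⟩ => ?_, fun ⟨hX, ht⟩ => ⟨[X], ⟨X, hX, rfl⟩, t, ht, rfl⟩⟩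
  obtain ⟨rfl, rfl⟩ : Y = X ∧ b = t := by simpa [hYa] using h
  exact ⟨hY, hb⟩

lemma kstar_mul_mul_top_add_kstar (K M : Language α) :
    K∗ * M * ⊤ + K∗ = 1 + M * ⊤ + K * (K∗ * M * ⊤ + K∗) := by
  conv_lhs => rw [← Language.one_add_self_mul_kstar_eq_kstar]
  simp only [add_mul, one_mul, mul_add, mul_assoc]
  abel

lemma cons_mem_kstar_symLang_mul_top_add_kstar {A C : Set α} :
    X :: t ∈ (symLang C)∗ * symLang A * ⊤ + (symLang C)∗ ↔
      X ∈ A ∨ X ∈ C ∧ t ∈ (symLang C)∗ * symLang A * ⊤ + (symLang C)∗ := by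
  conv_lhs => rw [kstar_mul_mul_top_add_kstar]
  rw [Language.mem_add, Language.mem_add, Language.mem_one, cons_mem_symLang_mul,
    cons_mem_symLang_mul]
  simp only [reduceCtorEq, false_or, show t ∈ (⊤ : Language α) from trivial, and_true]

end Languages

theorem WDiaLtOne_eq_general {Γ : Type*} [Fintype Γ] (Δ : BPA Γ) (ΓT : Set Γ)
    (A C : Set Γ)
    (hA : A = {X | [X] ∈ Δ.WDiaLtOne (topLang ΓT ∪ {([] : List Γ)})})
    (hC : C = {X | [X] ∈ Δ.WDiaLtOne (topLang ΓT)}) :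
    (Δ.WDiaLtOne (topLang ΓT) : Language Γ)
        = KStar.kstar (symLang C) * symLang A * (⊤ : Language Γ)
            + KStar.kstar (symLang C) := by
  subst hA hC
  refine Language.ext fun c => ?_
  induction c with
  | nil =>
    exact iff_of_true (BPA.nil_mem_WDiaLtOne BPA.nil_notMem_topLang)
      ((Language.mem_add _ _ _).mpr (Or.inr (Language.nil_mem_kstar _)))
  | cons X t ih =>
    rw [cons_mem_kstar_symLang_mul_top_add_kstar, ← ih]
    exact BPA.cons_mem_WDiaLtOne_iff

/-- `W_Diamond(T,<1) = C* A Γ* ∪ C*` where `A = W_Diamond(T_ε,<1) ∩ Γ` and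
`C = W_Diamond(T,<1) ∩ Γ`. -/
theorem WDiaLtOne_eq {Γ : Type*} [Fintype Γ] (Δ : BPA Γ) (ΓT : Set Γ)
    (hT : ∀ R ∈ ΓT, ∀ α, Δ.rule R α ↔ α = [R])
    (A C : Set Γ)
    (hA : A = {X | [X] ∈ Δ.WDiaLtOne (topLang ΓT ∪ {([] : List Γ)})})
    (hC : C = {X | [X] ∈ Δ.WDiaLtOne (topLang ΓT)}) :
    (Δ.WDiaLtOne (topLang ΓT) : Language Γ)
        = KStar.kstar (symLang C) * symLang A * (⊤ : Language Γ)
            + KStar.kstar (symLang C) :=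
  WDiaLtOne_eq_general Δ ΓT A C hA hC
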